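/- arXiv:math/0406064 — 5 statements merged into one kernel-verified Lean document; each statement's English description precedes it below -/
import Mathlib

section
/- Let (Xₙ)_{n≥0} be a sequence of positive reals tending to infinity, (sₙ)_{n≥1} a sequence of positive integers, and c ≥ 1 a constant with c^{-s_{n+1}} Xₙ^{s_{n+1}} X_{n-1} ≤ X_{n+1} ≤ c^{s_{n+1}} Xₙ^{s_{n+1}} X_{n-1} for all n ≥ 1. Define ηₙ by X_{n+1} = Xₙ^{ηₙ}. Then ηₙ = [s_{n+1}; sₙ, ..., s₁](1 + o(1)) as n → ∞, where [s_{n+1}; sₙ, ..., s₁] denotes the finite continued fraction s_{n+1} + 1/(sₙ + 1/(⋯ + 1/s₁)). -/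
/-!
Write `yₙ = log Xₙ`, so that `yₙ₊₁ = ηₙ yₙ` and `yₙ₊₁ = sₙ₊₁ yₙ + yₙ₋₁ + O(sₙ₊₁)`. Dividing by `yₙ`
gives `ηₙ = sₙ₊₁ + 1/ηₙ₋₁ + eₙ` with `|eₙ| ≤ sₙ₊₁ · O(1/yₙ)`, while the continued fractions satisfy
`Cₙ = sₙ₊₁ + 1/Cₙ₋₁` exactly. Measuring the discrepancy of a ratio `r > 0` from `1` by
`max (r - 1) (r⁻¹ - 1)`, the map `p ↦ S + 1/p` (with `S ≥ 1`) halves the discrepancy of `p / C` for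
`C ≥ 1`, and the error `eₙ` adds `O(1/yₙ)`. Hence the discrepancy of `ηₙ / Cₙ` tends to `0`.
-/

open Filter

/-- Value of the finite continued fraction `[a₀; a₁, ..., aₖ]` given as a list
`[a₀, a₁, ..., aₖ]` (with the convention `1/0 = 0` harmless here since all
partial quotients are positive). -/
noncomputable def cfVal : List ℝ → ℝ
  | [] => 0
  | a :: l => a + (cfVal l)⁻¹

open Real Topology

/-- The continued fraction `[s_{n+1}; sₙ, ..., s₁]`. -/
noncomputable def cfRev (s : ℕ → ℕ) (n : ℕ) : ℝ :=
  cfVal ((List.range (n + 1)).map fun i => (s (n + 1 - i) : ℝ))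

lemma cfRev_zero (s : ℕ → ℕ) : cfRev s 0 = s 1 := by
  simp [cfRev, cfVal]

lemma cfRev_succ (s : ℕ → ℕ) (n : ℕ) : cfRev s (n + 1) = s (n + 2) + (cfRev s n)⁻¹ := by
  rw [cfRev, List.range_succ_eq_map, List.map_cons, cfVal, List.map_map, cfRev]
  congr 4
  funext i
  simp only [Function.comp_apply]
  congr 2
  omega

lemma one_le_cfRev {s : ℕ → ℕ} (hs : ∀ n, 1 ≤ s n) (n : ℕ) : 1 ≤ cfRev s n := by
  induction n with
  | zero => rw [cfRev_zero]; exact_mod_cast hs 1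
  | succ n ih =>
    rw [cfRev_succ]
    have : (1 : ℝ) ≤ s (n + 2) := by exact_mod_cast hs _
    have : 0 ≤ (cfRev s n)⁻¹ := by positivity
    linarith

/-- For `r > 0` this is `exp |log r| - 1`. -/
noncomputable def ratioDev (r : ℝ) : ℝ := max (r - 1) (r⁻¹ - 1)

lemma ratioDev_nonneg {r : ℝ} (hr : 0 < r) : 0 ≤ ratioDev r := by
  rcases le_total r 1 with h | h
  · exact le_max_of_le_right (by linarith [one_le_inv₀ hr |>.2 h])
  · exact le_max_of_le_left (by linarith)

lemma abs_sub_one_le_ratioDev {r : ℝ} (hr : 0 < r) : |r - 1| ≤ ratioDev r := by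
  rcases le_total r 1 with h | h
  · have : r * (r⁻¹ - 1) = 1 - r := by field_simp
    rw [abs_of_nonpos (by linarith)]
    refine le_max_of_le_right ?_
    nlinarith [one_le_inv₀ hr |>.2 h]
  · rw [abs_of_nonneg (by linarith)]
    exact le_max_left _ _

lemma ratioDev_le_of_abs_sub_one_le {r t : ℝ} (ht : t ≤ 1 / 2) (h : |r - 1| ≤ t) :
    ratioDev r ≤ 2 * t := by
  obtain ⟨h₁, h₂⟩ := abs_le.1 h
  have hr : 0 < r := by linarith
  refine max_le (by linarith) ?_
  rw [sub_le_iff_le_add, inv_le_iff_one_le_mul₀ hr]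
  nlinarith

lemma ratioDev_mul_le {a b : ℝ} (ha : 0 < a) (hb : 0 < b) :
    ratioDev (a * b) ≤ ratioDev a + ratioDev b + ratioDev a * ratioDev b := by
  have key : max (a * b) (a * b)⁻¹ ≤ max a a⁻¹ * max b b⁻¹ := by
    rw [mul_inv]
    exact max_le
      (mul_le_mul (le_max_left _ _) (le_max_left _ _) hb.le (ha.le.trans (le_max_left _ _)))
      (mul_le_mul (le_max_right _ _) (le_max_right _ _) (inv_pos.2 hb).le
        (ha.le.trans (le_max_left _ _)))
  simp only [ratioDev, max_sub_sub_right]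
  nlinarith [key]

lemma ratioDev_add_inv_div_le {S C p : ℝ} (hS : 1 ≤ S) (hC : 1 ≤ C) (hp : 0 < p) :
    ratioDev ((S + p⁻¹) / (S + C⁻¹)) ≤ ratioDev (p / C) / 2 := by
  have hC0 : 0 < C := by linarith
  have hm := ratioDev_nonneg (div_pos hp hC0)
  have hm₁ : p / C - 1 ≤ ratioDev (p / C) := le_max_left _ _
  have hm₂ : C / p - 1 ≤ ratioDev (p / C) := by rw [← inv_div]; exact le_max_right _ _
  have hCi : C⁻¹ ≤ 1 := inv_le_one_of_one_le₀ hC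
  have hD : 0 < S + C⁻¹ := by positivity
  refine max_le ?_ ?_
  · rw [sub_le_iff_le_add, div_le_iff₀ hD]
    have : p⁻¹ - C⁻¹ = C⁻¹ * (C / p - 1) := by field_simp
    nlinarith [mul_le_mul_of_nonneg_left hm₂ (inv_pos.2 hC0).le]
  · rw [inv_div, sub_le_iff_le_add, div_le_iff₀ (by positivity)]
    rcases le_total p C with h | h
    · nlinarith [inv_anti₀ hp h]
    · have : C⁻¹ - p⁻¹ = p⁻¹ * (p / C - 1) := by field_simp
      have : p⁻¹ ≤ 1 := inv_le_one_of_one_le₀ (hC.trans h)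
      nlinarith [mul_le_mul_of_nonneg_left hm₁ (inv_pos.2 hp).le]

lemma ratioDev_step {S C p p' t : ℝ} (hS : 1 ≤ S) (hC : 1 ≤ C) (hp : 0 < p) (ht : t ≤ 1 / 2)
    (he : |p' - S - p⁻¹| ≤ S * t) :
    ratioDev (p' / (S + C⁻¹)) ≤ (1 / 2 + t) * ratioDev (p / C) + 2 * t := by
  have hA : 0 < S + p⁻¹ := by positivity
  have hB : 0 < S + C⁻¹ := by positivity
  have ht₀ : 0 ≤ t := by nlinarith [abs_nonneg (p' - S - p⁻¹)]
  have hpert : |p' / (S + p⁻¹) - 1| ≤ t := by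
    rw [div_sub_one hA.ne', abs_div, abs_of_pos hA, div_le_iff₀ hA, ← sub_sub]
    nlinarith [inv_pos.2 hp]
  have hfactor : p' / (S + C⁻¹) = p' / (S + p⁻¹) * ((S + p⁻¹) / (S + C⁻¹)) := by
    field_simp
  have hε := ratioDev_le_of_abs_sub_one_le ht hpert
  have hδ := ratioDev_add_inv_div_le hS hC hp
  have hδ₀ := ratioDev_nonneg (div_pos hA hB)
  have hm₀ := ratioDev_nonneg (div_pos hp (by linarith : (0 : ℝ) < C))
  rw [hfactor]
  calc _ ≤ _ := ratioDev_mul_le (by linarith [abs_le.1 hpert]) (div_pos hA hB)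
    _ ≤ 2 * t + ratioDev (p / C) / 2 + 2 * t * (ratioDev (p / C) / 2) := by gcongr
    _ = _ := by ring

lemma tendsto_zero_of_le_mul_add {a b : ℕ → ℝ} {q : ℝ} (hq₀ : 0 ≤ q) (hq : q < 1)
    (ha : ∀ᶠ n in atTop, 0 ≤ a n) (hb : Tendsto b atTop (𝓝 0))
    (h : ∀ᶠ n in atTop, a (n + 1) ≤ q * a n + b n) : Tendsto a atTop (𝓝 0) := by
  refine tendsto_order.2 ⟨fun _ hε => ha.mono fun n hn => hε.trans_le hn, fun ε hε => ?_⟩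
  have hbε : ∀ᶠ n in atTop, b n ≤ (1 - q) * (ε / 2) :=
    hb.eventually (ge_mem_nhds (by nlinarith))
  obtain ⟨N, hN⟩ := eventually_atTop.1 (ha.and (h.and hbε))
  have hbound : ∀ k, a (N + k) ≤ q ^ k * a N + ε / 2 := by
    intro k
    induction k with
    | zero => simp only [add_zero, pow_zero, one_mul]; linarith
    | succ k ih =>
      obtain ⟨-, hstep, hbk⟩ := hN (N + k) (by omega)
      calc a (N + (k + 1)) ≤ q * a (N + k) + b (N + k) := hstep
        _ ≤ q * (q ^ k * a N + ε / 2) + (1 - q) * (ε / 2) := by gcongr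
        _ = q ^ (k + 1) * a N + ε / 2 := by ring
  have hgeom : Tendsto (fun k => q ^ k * a N) atTop (𝓝 0) := by
    simpa using (tendsto_pow_atTop_nhds_zero_of_lt_one hq₀ hq).mul_const (a N)
  obtain ⟨K, hK⟩ := eventually_atTop.1 (hgeom.eventually (gt_mem_nhds (half_pos hε)))
  filter_upwards [eventually_ge_atTop (N + K)] with n hn
  obtain ⟨k, rfl⟩ := Nat.exists_eq_add_of_le (le_of_add_le_left hn)
  linarith [hbound k, hK k (by omega)]

lemma abs_ratio_sub_inv_le {y₀ y₁ y₂ η₀ η₁ S L : ℝ} (hy₁ : 0 < y₁) (h₁ : y₁ = η₀ * y₀)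
    (h₂ : y₂ = η₁ * y₁) (h : |y₂ - (S * y₁ + y₀)| ≤ S * L) :
    |η₁ - S - η₀⁻¹| ≤ S * (L / y₁) := by
  have hη₀ : η₀ ≠ 0 := by rintro rfl; rw [zero_mul] at h₁; linarith
  have : (η₁ - S - η₀⁻¹) * y₁ = y₂ - (S * y₁ + y₀) := by
    rw [h₂, h₁]; field_simp; ring
  rwa [← mul_div_assoc, le_div_iff₀ hy₁, ← abs_of_pos hy₁, ← abs_mul, this]

lemma abs_log_sub_log_le {c σ Z W : ℝ} (hc : 0 < c) (hZ : 0 < Z) (h₁ : c ^ (-σ) * Z ≤ W)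
    (h₂ : W ≤ c ^ σ * Z) : |log W - log Z| ≤ σ * log c := by
  have hW : 0 < W := lt_of_lt_of_le (by positivity) h₁
  have l₁ := log_le_log (by positivity) h₁
  have l₂ := log_le_log hW h₂
  rw [log_mul (by positivity) hZ.ne', log_rpow hc] at l₁ l₂
  rw [abs_le]
  constructor <;> linarith

lemma tendsto_div_cfRev_of_log {y η : ℕ → ℝ} {s : ℕ → ℕ} {L : ℝ} (hs : ∀ n, 1 ≤ s n)
    (hy : Tendsto y atTop atTop) (hyη : ∀ n, y (n + 1) = η n * y n)
    (hrec : ∀ n, 1 ≤ n → |y (n + 1) - (s (n + 1) * y n + y (n - 1))| ≤ s (n + 1) * L) :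
    Tendsto (fun n => η n / cfRev s n) atTop (𝓝 1) := by
  have ht : Tendsto (fun n => L / y n) atTop (𝓝 0) := tendsto_const_nhds.div_atTop hy
  have hy₀ : ∀ᶠ n in atTop, 0 < y n := hy.eventually_gt_atTop 0
  have hy₁ : ∀ᶠ n in atTop, 0 < y (n + 1) := (tendsto_add_atTop_nat 1).eventually hy₀
  have hC : ∀ n, 0 < cfRev s n := fun n => by linarith [one_le_cfRev hs n]
  have hη : ∀ᶠ n in atTop, 0 < η n := by
    filter_upwards [hy₀, hy₁] with n h₀ h₁
    rw [hyη] at h₁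
    exact (pos_iff_pos_of_mul_pos h₁).2 h₀
  have hr : ∀ᶠ n in atTop, 0 < η n / cfRev s n := hη.mono fun n h => div_pos h (hC n)
  have hstep : ∀ᶠ n in atTop, ratioDev (η (n + 1) / cfRev s (n + 1)) ≤
      3 / 4 * ratioDev (η n / cfRev s n) + 2 * (L / y (n + 1)) := by
    filter_upwards [hy₁, hη, (tendsto_add_atTop_nat 1).eventually
      (ht.eventually (ge_mem_nhds (by norm_num : (0 : ℝ) < 1 / 4)))] with n hyn hηn htn
    have hrecn := hrec (n + 1) (by omega)
    rw [Nat.add_sub_cancel] at hrecn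
    have he := abs_ratio_sub_inv_le hyn (hyη n) (hyη (n + 1)) hrecn
    have hS : (1 : ℝ) ≤ s (n + 2) := by exact_mod_cast hs _
    have hm := ratioDev_nonneg (div_pos hηn (hC n))
    rw [cfRev_succ]
    nlinarith [ratioDev_step hS (one_le_cfRev hs n) hηn (by linarith) he]
  have hm := tendsto_zero_of_le_mul_add (by norm_num) (by norm_num)
    (hr.mono fun _ h => ratioDev_nonneg h)
    (by simpa using (ht.comp (tendsto_add_atTop_nat 1)).const_mul 2) hstep
  rw [tendsto_iff_norm_sub_tendsto_zero]
  exact squeeze_zero' (Eventually.of_forall fun _ => norm_nonneg _)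
    (hr.mono fun _ h => abs_sub_one_le_ratioDev h) hm

/-- Lemma 4.1: if `(Xₙ)` is a sequence of positive reals tending to infinity and
satisfying `c^{-s_{n+1}} Xₙ^{s_{n+1}} X_{n-1} ≤ X_{n+1} ≤ c^{s_{n+1}} Xₙ^{s_{n+1}} X_{n-1}`
for all `n ≥ 1`, and `ηₙ` is defined by `X_{n+1} = Xₙ^{ηₙ}`, then
`ηₙ = [s_{n+1}; sₙ, ..., s₁] (1 + o(1))` as `n → ∞`. -/
theorem stmt6 (X : ℕ → ℝ) (s : ℕ → ℕ) (c : ℝ) (η : ℕ → ℝ)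
    (hX : ∀ n, 0 < X n) (hXtop : Tendsto X atTop atTop)
    (hs : ∀ n, 1 ≤ s n) (hc : 1 ≤ c)
    (hrec : ∀ n : ℕ, 1 ≤ n →
      c ^ (-(s (n + 1) : ℝ)) * X n ^ (s (n + 1) : ℝ) * X (n - 1) ≤ X (n + 1) ∧
      X (n + 1) ≤ c ^ ((s (n + 1) : ℝ)) * X n ^ (s (n + 1) : ℝ) * X (n - 1))
    (hη : ∀ n, X (n + 1) = X n ^ η n) :
    Tendsto (fun n =>
        η n / cfVal ((List.range (n + 1)).map fun i => (s (n + 1 - i) : ℝ)))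
      atTop (nhds 1) := by
  have hc₀ : 0 < c := by linarith
  refine tendsto_div_cfRev_of_log (y := fun n => log (X n)) (L := log c) hs
    (tendsto_log_atTop.comp hXtop) (fun n => by simp only [hη n, log_rpow (hX n)]) fun n hn => ?_
  obtain ⟨h₁, h₂⟩ := hrec n hn
  rw [mul_assoc] at h₁ h₂
  have hZ : 0 < X n ^ (s (n + 1) : ℝ) * X (n - 1) := mul_pos (rpow_pos_of_pos (hX n) _) (hX _)
  have := abs_log_sub_log_le hc₀ hZ h₁ h₂
  rwa [log_mul (rpow_pos_of_pos (hX n) _).ne' (hX _).ne', log_rpow (hX n)] at this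
end

section
/- Let (sₖ)_{k≥1} be positive integers and define words by m₀ = b, m₁ = b^{s₁-1}a, m_{k+1} = m_k^{s_{k+1}} m_{k-1}. Then for every k ≥ 3, the word m_{k+2} begins with m_k^{1+s_{k+1}} m'_{k-1} f_k, where w' is w with its last two letters removed, and f_k = ab if k is even, f_k = ba if k is odd. -/
/-- `w.drop2` is the word `w` deprived of its last two letters. -/
def drop2 {A : Type*} (w : List A) : List A := w.dropLast.dropLast

/-- `wordPow w t` is the `t`-fold concatenation `w^t`. -/
def wordPow {A : Type*} (w : List A) (t : ℕ) : List A := (List.replicate t w).flatten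

theorem wordPow_succ {A : Type*} (w : List A) (t : ℕ) :
    wordPow w (t + 1) = w ++ wordPow w t := by
  simp [wordPow, List.replicate_succ]

theorem wordPow_comm {A : Type*} (w : List A) (t : ℕ) :
    w ++ wordPow w t = wordPow w t ++ w := by
  induction t with
  | zero => simp [wordPow]
  | succ n ih => rw [wordPow_succ, ih, ← List.append_assoc, ih]

theorem wordPow_succ' {A : Type*} (w : List A) (t : ℕ) :
    wordPow w (t + 1) = wordPow w t ++ w := by
  rw [wordPow_succ, wordPow_comm]

theorem drop2_concat2 {A : Type*} (w : List A) (x y : A) : drop2 (w ++ [x, y]) = w := by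
  have h : w ++ [x, y] = (w ++ [x]) ++ [y] := by simp
  rw [drop2, h, List.dropLast_concat, List.dropLast_concat]

/-- the alternating last-two-letters words -/
def fw {A : Type*} (a b : A) (k : ℕ) : List A := if Even k then [a, b] else [b, a]

theorem fw_add_two {A : Type*} (a b : A) (k : ℕ) : fw a b (k + 2) = fw a b k := by
  simp [fw, Nat.even_add]

theorem drop2_append_fw {A : Type*} (a b : A) (k : ℕ) (w : List A) :
    drop2 (w ++ fw a b k) = w := by
  unfold fw
  split <;> exact drop2_concat2 ..

theorem cons_replicate_append {A : Type*} (n : ℕ) (b : A) (l : List A) :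
    b :: (List.replicate n b ++ l) = List.replicate n b ++ (b :: l) := by
  induction n with
  | zero => rfl
  | succ n ih => simp [List.replicate_succ, ih]

theorem keyPL {A : Type*} (a b : A) (s : ℕ → ℕ) (hs : ∀ k, 1 ≤ s k)
    (m : ℕ → List A) (hm0 : m 0 = [b])
    (hm1 : m 1 = List.replicate (s 1 - 1) b ++ [a])
    (hmr : ∀ k : ℕ, 1 ≤ k → m (k + 1) = wordPow (m k) (s (k + 1)) ++ m (k - 1)) :
    ∀ k : ℕ, 1 ≤ k →
      m (k + 1) ++ m k = m k ++ drop2 (m (k + 1)) ++ fw a b k ∧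
      m (k + 1) = drop2 (m (k + 1)) ++ fw a b (k + 1) := by
  intro k hk
  induction k, hk using Nat.le_induction with
  | base =>
    obtain ⟨t, ht⟩ : ∃ t, s 2 = t + 1 := ⟨s 2 - 1, by have := hs 2; omega⟩
    set r : List A := List.replicate (s 1 - 1) b with hr
    have h := hmr 1 le_rfl
    norm_num at h
    rw [ht, wordPow_succ', hm0, hm1] at h
    set W : List A := wordPow (r ++ [a]) t with hW
    have hm2 : m 2 = (W ++ r) ++ [a, b] := by rw [h]; simp
    have hd2 : drop2 (m 2) = W ++ r := by rw [hm2, drop2_concat2]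
    have hw : (r ++ [a]) ++ W = W ++ (r ++ [a]) := wordPow_comm _ t
    have hcr : b :: (r ++ [a]) = r ++ [b, a] := cons_replicate_append _ b [a]
    have f1 : fw a b 1 = [b, a] := by simp [fw, Nat.even_iff]
    have f2 : fw a b (1 + 1) = [a, b] := by norm_num [fw]
    constructor
    · rw [hd2, hm2, hm1, f1]
      calc ((W ++ r) ++ [a, b]) ++ (r ++ [a])
          = W ++ (r ++ ([a] ++ (b :: (r ++ [a])))) := by simp
        _ = W ++ (r ++ ([a] ++ (r ++ [b, a]))) := by rw [hcr]
        _ = (W ++ (r ++ [a])) ++ (r ++ [b, a]) := by simp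
        _ = ((r ++ [a]) ++ W) ++ (r ++ [b, a]) := by rw [hw]
        _ = (r ++ [a]) ++ (W ++ r) ++ [b, a] := by simp
    · rw [hd2, hm2, f2]
  | succ k hk ih =>
    obtain ⟨P, L⟩ := ih
    obtain ⟨t, ht⟩ : ∃ t, s (k + 2) = t + 1 := ⟨s (k + 2) - 1, by have := hs (k + 2); omega⟩
    simp only [show k + 1 + 1 = k + 2 by omega]
    have h := hmr (k + 1) (by omega)
    simp only [show k + 1 + 1 = k + 2 by omega, Nat.add_sub_cancel] at h
    set W : List A := wordPow (m (k + 1)) t with hW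
    have hm2 : m (k + 2) = (W ++ (m k ++ drop2 (m (k + 1)))) ++ fw a b k := by
      rw [h, ht, wordPow_succ', ← hW, List.append_assoc, P]
      simp
    have hd : drop2 (m (k + 2)) = W ++ (m k ++ drop2 (m (k + 1))) := by
      rw [hm2, drop2_append_fw]
    have hw : m (k + 1) ++ W = W ++ m (k + 1) := wordPow_comm _ t
    constructor
    · rw [hd, hm2]
      calc ((W ++ (m k ++ drop2 (m (k + 1)))) ++ fw a b k) ++ m (k + 1)
          = W ++ ((m k ++ drop2 (m (k + 1)) ++ fw a b k) ++ m (k + 1)) := by simp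
        _ = W ++ ((m (k + 1) ++ m k) ++ m (k + 1)) := by rw [P]
        _ = W ++ ((m (k + 1) ++ m k) ++ (drop2 (m (k + 1)) ++ fw a b (k + 1))) := by
            rw [← L]
        _ = (W ++ m (k + 1)) ++ (m k ++ (drop2 (m (k + 1)) ++ fw a b (k + 1))) := by simp
        _ = (m (k + 1) ++ W) ++ (m k ++ (drop2 (m (k + 1)) ++ fw a b (k + 1))) := by rw [hw]
        _ = m (k + 1) ++ (W ++ (m k ++ drop2 (m (k + 1)))) ++ fw a b (k + 1) := by simp
    · rw [fw_add_two, hd, ← hm2]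

theorem mk_prefix {A : Type*} (s : ℕ → ℕ) (hs : ∀ k, 1 ≤ s k)
    (m : ℕ → List A)
    (hmr : ∀ k : ℕ, 1 ≤ k → m (k + 1) = wordPow (m k) (s (k + 1)) ++ m (k - 1))
    (k : ℕ) (hk : 1 ≤ k) : m k <+: m (k + 1) := by
  obtain ⟨u, hu⟩ : ∃ u, s (k + 1) = u + 1 := ⟨s (k + 1) - 1, by have := hs (k + 1); omega⟩
  rw [hmr k hk, hu, wordPow_succ]
  exact ⟨wordPow (m k) u ++ m (k - 1), by simp⟩

/-- Lemma 5.1 (second part): for every `k ≥ 3`, the word `m_{k+2}` begins with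
`m_k^{1+s_{k+1}} m'_{k-1} f_k`, where `f_k = ab` for even `k` and `f_k = ba`
for odd `k`. -/
theorem stmt8 {A : Type*} (a b : A) (hab : a ≠ b) (s : ℕ → ℕ) (hs : ∀ k, 1 ≤ s k)
    (m : ℕ → List A) (hm0 : m 0 = [b])
    (hm1 : m 1 = List.replicate (s 1 - 1) b ++ [a])
    (hmr : ∀ k : ℕ, 1 ≤ k → m (k + 1) = wordPow (m k) (s (k + 1)) ++ m (k - 1)) :
    ∀ k : ℕ, 3 ≤ k →
      (wordPow (m k) (1 + s (k + 1)) ++ drop2 (m (k - 1)) ++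
        (if Even k then [a, b] else [b, a])) <+: m (k + 2) := by
  intro k hk
  obtain ⟨j, rfl⟩ : ∃ j, k = j + 3 := ⟨k - 3, by omega⟩
  simp only [show j + 3 + 1 = j + 4 by omega, show j + 3 - 1 = j + 2 by omega,
    show j + 3 + 2 = j + 5 by omega]
  have key := keyPL a b s hs m hm0 hm1 hmr
  have hf : fw a b (j + 3) = fw a b (j + 1) := by
    rw [show j + 3 = (j + 1) + 2 by omega, fw_add_two]
  -- Q : m (j+2) ++ m (j+3) = m (j+3) ++ drop2 (m (j+2)) ++ fw a b (j+3)
  have Q : m (j + 2) ++ m (j + 3) = m (j + 3) ++ drop2 (m (j + 2)) ++ fw a b (j + 3) := by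
    have P := (key (j + 1) (by omega)).1
    simp only [show j + 1 + 1 = j + 2 by omega] at P
    have h3 := hmr (j + 2) (by omega)
    simp only [show j + 2 + 1 = j + 3 by omega, show j + 2 - 1 = j + 1 by omega] at h3
    have hw := wordPow_comm (m (j + 2)) (s (j + 3))
    calc m (j + 2) ++ m (j + 3)
        = m (j + 2) ++ (wordPow (m (j + 2)) (s (j + 3)) ++ m (j + 1)) := by rw [h3]
        _ = (m (j + 2) ++ wordPow (m (j + 2)) (s (j + 3))) ++ m (j + 1) := by simp
        _ = (wordPow (m (j + 2)) (s (j + 3)) ++ m (j + 2)) ++ m (j + 1) := by rw [hw]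
        _ = wordPow (m (j + 2)) (s (j + 3)) ++ (m (j + 2) ++ m (j + 1)) := by simp
        _ = wordPow (m (j + 2)) (s (j + 3)) ++
            (m (j + 1) ++ drop2 (m (j + 2)) ++ fw a b (j + 1)) := by rw [P]
        _ = (wordPow (m (j + 2)) (s (j + 3)) ++ m (j + 1)) ++ drop2 (m (j + 2)) ++
            fw a b (j + 1) := by simp
        _ = m (j + 3) ++ drop2 (m (j + 2)) ++ fw a b (j + 3) := by rw [← h3, hf]
  -- the claimed word equals m (j+4) ++ m (j+3)
  have heq : wordPow (m (j + 3)) (1 + s (j + 4)) ++ drop2 (m (j + 2)) ++ fw a b (j + 3)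
      = m (j + 4) ++ m (j + 3) := by
    have h4 := hmr (j + 3) (by omega)
    simp only [show j + 3 + 1 = j + 4 by omega, show j + 3 - 1 = j + 2 by omega] at h4
    have hw := wordPow_comm (m (j + 3)) (s (j + 4))
    calc wordPow (m (j + 3)) (1 + s (j + 4)) ++ drop2 (m (j + 2)) ++ fw a b (j + 3)
        = (wordPow (m (j + 3)) (s (j + 4)) ++ m (j + 3)) ++ drop2 (m (j + 2)) ++
            fw a b (j + 3) := by rw [Nat.add_comm 1, wordPow_succ']
      _ = wordPow (m (j + 3)) (s (j + 4)) ++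
            (m (j + 3) ++ drop2 (m (j + 2)) ++ fw a b (j + 3)) := by simp
      _ = wordPow (m (j + 3)) (s (j + 4)) ++ (m (j + 2) ++ m (j + 3)) := by rw [Q]
      _ = (wordPow (m (j + 3)) (s (j + 4)) ++ m (j + 2)) ++ m (j + 3) := by simp
      _ = m (j + 4) ++ m (j + 3) := by rw [h4]
  -- m (j+4) ++ m (j+3) is a prefix of m (j+5)
  have hpre : m (j + 4) ++ m (j + 3) <+: m (j + 5) := by
    have h5 := hmr (j + 4) (by omega)
    simp only [show j + 4 + 1 = j + 5 by omega, show j + 4 - 1 = j + 3 by omega] at h5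
    obtain ⟨t, ht⟩ : ∃ t, s (j + 5) = t + 1 := ⟨s (j + 5) - 1, by have := hs (j + 5); omega⟩
    have h5' : m (j + 5) = m (j + 4) ++ (wordPow (m (j + 4)) t ++ m (j + 3)) := by
      rw [h5, ht, wordPow_succ]
      simp
    rw [h5']
    apply (List.prefix_append_right_inj (m (j + 4))).2
    cases t with
    | zero => simp [wordPow]
    | succ u =>
      rw [wordPow_succ]
      have hp : m (j + 3) <+: m (j + 4) := mk_prefix s hs m hmr (j + 3) (by omega)
      exact hp.trans (by rw [List.append_assoc]; exact (m (j + 4)).prefix_append _)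
  have hiff : fw a b (j + 3) = if Even (j + 3) then [a, b] else [b, a] := rfl
  rw [← hiff, heq]
  exact hpre
end

section
/- Let a ≠ b be positive integers and let m = ℓ₁⋯ℓ_q be a finite word over {a,b} such that m' (the word m minus its last two letters) is a palindrome. Write the associated matrix M = ∏ᵢ (ℓᵢ 1; 1 0) as M = M'F where M' = (x₀ x₁; x₁ x₂) is the symmetric matrix of m' and F = (f₀ f₁; f₂ f₃) is the matrix of the final two letters. Then the determinant of the 3×3 matrix of coefficients of the three linear forms (in x₀, x₁, x₂) given by the trinomial (f₁x₀+f₃x₁)T² + (f₀x₀+(f₂-f₁)x₁-f₃x₂)T - f₀x₁-f₂x₂ equals (f₂-f₁)(f₀f₃-f₁f₂) = ±(a-b), which is nonzero. -/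
/-- The matrix associated to a word `ℓ₁⋯ℓ_q` over distinct positive integers:
the product of the matrices `(ℓᵢ 1; 1 0)`. -/
def wordMatrix (m : List ℤ) : Matrix (Fin 2) (Fin 2) ℤ :=
  (m.map fun ℓ => !![ℓ, 1; 1, 0]).prod

/-- In Lemma 6.1: let `a ≠ b` be positive integers and `m` a word over `{a,b}`
of length `≥ 2` whose truncation `m'` (last two letters removed) is a
palindrome, so that `M = M' F` with `M'` the symmetric matrix of `m'` and `F`
the matrix `(f₀ f₁; f₂ f₃)` of the last two letters.  Then the determinant of
the `3×3` matrix of coefficients of the three linear forms in `x₀, x₁, x₂`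
appearing in the trinomial
`(f₁x₀+f₃x₁)T² + (f₀x₀+(f₂-f₁)x₁-f₃x₂)T - f₀x₁ - f₂x₂`
equals `(f₂-f₁)(f₀f₃-f₁f₂) = ±(a-b)`, which is nonzero. -/
theorem stmt13 (a b : ℤ) (ha : 0 < a) (hb : 0 < b) (hab : a ≠ b)
    (m : List ℤ) (hm : ∀ ℓ ∈ m, ℓ = a ∨ ℓ = b) (hlen : 2 ≤ m.length)
    (hpal : (m.dropLast.dropLast).reverse = m.dropLast.dropLast)
    (hlast : m.drop (m.length - 2) = [a, b] ∨ m.drop (m.length - 2) = [b, a])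
    (F : Matrix (Fin 2) (Fin 2) ℤ)
    (hF : F = wordMatrix (m.drop (m.length - 2)))
    (hfact : wordMatrix m = wordMatrix (m.dropLast.dropLast) * F) :
    Matrix.det !![F 0 1, F 1 1, 0;
                  F 0 0, F 1 0 - F 0 1, -(F 1 1);
                  0, -(F 0 0), -(F 1 0)] =
      (F 1 0 - F 0 1) * (F 0 0 * F 1 1 - F 0 1 * F 1 0) ∧
    ((F 1 0 - F 0 1) * (F 0 0 * F 1 1 - F 0 1 * F 1 0) = a - b ∨
      (F 1 0 - F 0 1) * (F 0 0 * F 1 1 - F 0 1 * F 1 0) = b - a) ∧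
    (F 1 0 - F 0 1) * (F 0 0 * F 1 1 - F 0 1 * F 1 0) ≠ 0 := by
  have key : F = !![a*b+1, a; b, 1] ∨ F = !![b*a+1, b; a, 1] := by
    rcases hlast with h | h <;> rw [h] at hF <;> [left; right] <;>
      simp [wordMatrix, hF, Matrix.mul_fin_two] <;> ring_nf
  constructor
  · simp [Matrix.det_fin_three]; ring
  have e00 : ∀ x y z w : ℤ, (!![x, y; z, w] : Matrix (Fin 2) (Fin 2) ℤ) 0 0 = x := fun _ _ _ _ => rfl
  have e01 : ∀ x y z w : ℤ, (!![x, y; z, w] : Matrix (Fin 2) (Fin 2) ℤ) 0 1 = y := fun _ _ _ _ => rfl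
  have e10 : ∀ x y z w : ℤ, (!![x, y; z, w] : Matrix (Fin 2) (Fin 2) ℤ) 1 0 = z := fun _ _ _ _ => rfl
  have e11 : ∀ x y z w : ℤ, (!![x, y; z, w] : Matrix (Fin 2) (Fin 2) ℤ) 1 1 = w := fun _ _ _ _ => rfl
  rcases key with h | h <;> subst h <;> rw [e00, e01, e10, e11]
  · exact ⟨Or.inr (by ring), by intro hc; apply hab; nlinarith⟩
  · exact ⟨Or.inl (by ring), by intro hc; apply hab; nlinarith⟩
end

section
/- Let a ≠ b be positive integers, let (sₖ) define the Sturmian words m_k as usual, and let α_k = [0; m_k, m_k, ...] be the quadratic real number whose continued fraction expansion is purely periodic with period the letters of m_k. Then H(α_k) ≫≪ X_k, where X_k = H(M_k) is the height of the matrix associated to m_k, and moreover the leading coefficient of the minimal polynomial of α_k over ℤ is ≫ X_k, and the Galois conjugate α'_k of α_k satisfies |α'_k - α_k| ≫ 1, with implied constants depending only on a, b and (sₖ). -/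
open Polynomial

/-- The height of an integer polynomial: the maximum of the absolute values of
its coefficients. -/
def polyHeight (P : Polynomial ℤ) : ℕ :=
  P.support.sup fun i => (P.coeff i).natAbs

/-- The height of a real algebraic number: the height of its minimal polynomial
over `ℤ`. -/
noncomputable def algHeight (α : ℝ) : ℕ :=
  sInf {h : ℕ | ∃ P : Polynomial ℤ, P ≠ 0 ∧ Polynomial.aeval α P = 0 ∧
    P.natDegree = (minpoly ℚ α).natDegree ∧ polyHeight P = h}

/-- The height of a `2×2` integer matrix. -/
def matHeightZ (M : Matrix (Fin 2) (Fin 2) ℤ) : ℕ :=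
  max (max (M 0 0).natAbs (M 0 1).natAbs) (max (M 1 0).natAbs (M 1 1).natAbs)

/-- `α` is the number `[0; m, m, m, ...]` whose continued fraction is purely
periodic with period the word associated to the matrix `M = (q_N q_{N-1}; p_N p_{N-1})`:
it lies in `(0,1)` and is fixed by the associated homography. -/
def IsPurelyPeriodicPt (α : ℝ) (M : Matrix (Fin 2) (Fin 2) ℤ) : Prop :=
  0 < α ∧ α < 1 ∧
    α * ((M 0 0 : ℝ) + (M 0 1 : ℝ) * α) = (M 1 0 : ℝ) + (M 1 1 : ℝ) * α

/-!
Write `M = M_k = (A B; C D)`, so that `X_k = A`. The fixed-point equation says that `α` is a root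
of `B X² + (A - D) X - C`, a polynomial of height `A`: this is the upper bound.

Conversely, any `p X² + q X + r` vanishing at `α` is a rational multiple of that polynomial, which
says that `p (M - A) ≡ 0 mod B`. Hence `B` divides `p` times every commutator of `M`. Consecutive
Sturmian matrices satisfy `M_k M_{k-1} - M_{k-1} M_k = (a - b) G` with `G ∈ GL₂(ℤ)`, so
`B ∣ p (a - b)`; together with `A ≤ (max a b + 1) B` this bounds `A` by a constant times `|p|`.

Finally, by Vieta the conjugate `β` satisfies `B (1 + α)(1 + β) = B - A + D - C ≤ 0`, so `β ≤ -1`.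
-/

theorem natAbs_coeff_le_polyHeight (P : ℤ[X]) (i : ℕ) : (P.coeff i).natAbs ≤ polyHeight P := by
  by_cases hi : i ∈ P.support
  · exact Finset.le_sup (f := fun i => (P.coeff i).natAbs) hi
  · simp [notMem_support_iff.mp hi]

theorem polyHeight_le {P : ℤ[X]} {h : ℕ} (hP : ∀ i, (P.coeff i).natAbs ≤ h) :
    polyHeight P ≤ h :=
  Finset.sup_le fun i _ => hP i

theorem algHeight_le {α : ℝ} {P : ℤ[X]} (hP0 : P ≠ 0) (hPα : aeval α P = 0)
    (hdeg : P.natDegree = (minpoly ℚ α).natDegree) : algHeight α ≤ polyHeight P :=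
  Nat.sInf_le ⟨P, hP0, hPα, hdeg, rfl⟩

theorem exists_natAbs_leadingCoeff_le_algHeight {α : ℝ} {P : ℤ[X]} (hP0 : P ≠ 0)
    (hPα : aeval α P = 0) (hdeg : P.natDegree = (minpoly ℚ α).natDegree) :
    ∃ Q : ℤ[X], aeval α Q = 0 ∧ Q.natDegree = (minpoly ℚ α).natDegree ∧
      Q.leadingCoeff.natAbs ≤ algHeight α := by
  have hne : {h : ℕ | ∃ Q : ℤ[X], Q ≠ 0 ∧ aeval α Q = 0 ∧
      Q.natDegree = (minpoly ℚ α).natDegree ∧ polyHeight Q = h}.Nonempty :=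
    ⟨_, P, hP0, hPα, hdeg, rfl⟩
  obtain ⟨Q, -, hQα, hQdeg, hQh⟩ := Nat.sInf_mem hne
  exact ⟨Q, hQα, hQdeg, (natAbs_coeff_le_polyHeight Q _).trans_eq hQh⟩

theorem aeval_eq_zero_of_aeval_minpoly_eq_zero {α β : ℝ} {P : ℤ[X]} (hPα : aeval α P = 0)
    (hβ : aeval β (minpoly ℚ α) = 0) : aeval β P = 0 := by
  obtain ⟨Q, hQ⟩ := minpoly.dvd ℚ α (p := P.map (algebraMap ℤ ℚ)) (by rwa [aeval_map_algebraMap])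
  rw [← aeval_map_algebraMap ℚ, hQ, map_mul, hβ, zero_mul]

theorem natDegree_minpoly_eq_two {α : ℝ} (hα : Irrational α) {P : ℤ[X]} (hPα : aeval α P = 0)
    (hdeg : P.natDegree = 2) : (minpoly ℚ α).natDegree = 2 := by
  set Q := P.map (algebraMap ℤ ℚ)
  have hQdeg : Q.natDegree = 2 := by
    rw [natDegree_map_eq_of_injective (RingHom.injective_int _), hdeg]
  have hQ0 : Q ≠ 0 := ne_zero_of_natDegree_gt (hQdeg ▸ one_lt_two)
  have hQα : aeval α Q = 0 := by rwa [aeval_map_algebraMap]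
  have hle : (minpoly ℚ α).natDegree ≤ 2 :=
    hQdeg ▸ natDegree_le_of_dvd (minpoly.dvd ℚ α hQα) hQ0
  have hpos := minpoly.natDegree_pos (IsAlgebraic.isIntegral ⟨Q, hQ0, hQα⟩)
  have hne : (minpoly ℚ α).natDegree ≠ 1 := by
    rw [Ne, minpoly.natDegree_eq_one_iff]
    rintro ⟨q, rfl⟩
    exact hα ⟨q, rfl⟩
  omega

theorem Irrational.eq_zero_of_intCast_mul_add {α : ℝ} (hα : Irrational α) {x y : ℤ}
    (h : x * α + y = 0) : x = 0 ∧ y = 0 := by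
  obtain rfl : x = 0 := by
    by_contra hx
    exact ((hα.intCast_mul hx).add_intCast y).ne_zero h
  exact ⟨rfl, by simpa using h⟩

theorem dvd_mul_of_commutator_eq_smul {n : Type*} [Fintype n] [DecidableEq n] [Nonempty n]
    {M M' E G : Matrix n n ℤ} {c d p t : ℤ} (hG : IsUnit G)
    (hcomm : M * M' - M' * M = c • G) (hE : p • (M - t • 1) = d • E) : d ∣ p * c := by
  have key : (p * c) • G = d • (E * M' - M' * E) := by
    calc (p * c) • G = p • (M - t • 1) * M' - M' * (p • (M - t • 1)) := by
          rw [mul_smul, ← hcomm]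
          simp only [Matrix.smul_mul, Matrix.mul_smul, sub_mul, mul_sub, Matrix.one_mul,
            Matrix.mul_one, smul_sub]
          abel
      _ = d • (E * M' - M' * E) := by
          rw [hE, smul_sub, Matrix.smul_mul, Matrix.mul_smul]
  have hdet := congrArg Matrix.det key
  rw [Matrix.det_smul, Matrix.det_smul] at hdet
  rw [← Int.pow_dvd_pow_iff (Fintype.card_ne_zero (α := n)),
    ← ((Matrix.isUnit_iff_isUnit_det G).mp hG).dvd_mul_right, hdet]
  exact dvd_mul_right _ _

theorem one_le_abs_sub_of_roots {A B C D α β : ℝ} (hB : 0 < B) (hBA : B ≤ A) (hDC : D ≤ C)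
    (hα0 : 0 < α) (hα : B * α ^ 2 + (A - D) * α - C = 0) (hβ : B * β ^ 2 + (A - D) * β - C = 0)
    (hne : β ≠ α) : 1 ≤ |β - α| := by
  have hsum : B * (α + β) = D - A := by
    have : (α - β) * (B * (α + β) + (A - D)) = 0 := by linear_combination hα - hβ
    linear_combination (mul_eq_zero.mp this).resolve_left (sub_ne_zero.mpr hne.symm)
  have hprod : B * (1 + α) * (1 + β) = B - A + D - C := by
    linear_combination (1 + α) * hsum - hα
  have hβ1 : 1 + β ≤ 0 := by
    by_contra! h
    nlinarith [mul_pos (mul_pos hB (by linarith : 0 < 1 + α)) h]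
  rw [abs_sub_comm, abs_of_pos (by linarith)]
  linarith

noncomputable def fixedPoly (M : Matrix (Fin 2) (Fin 2) ℤ) : ℤ[X] :=
  C (M 0 1) * X ^ 2 + C (M 0 0 - M 1 1) * X + C (-M 1 0)

theorem natDegree_fixedPoly {M : Matrix (Fin 2) (Fin 2) ℤ} (hB : M 0 1 ≠ 0) :
    (fixedPoly M).natDegree = 2 :=
  natDegree_quadratic hB

theorem fixedPoly_ne_zero {M : Matrix (Fin 2) (Fin 2) ℤ} (hB : M 0 1 ≠ 0) : fixedPoly M ≠ 0 :=
  ne_zero_of_natDegree_gt ((natDegree_fixedPoly hB).symm ▸ one_lt_two)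

theorem aeval_fixedPoly (M : Matrix (Fin 2) (Fin 2) ℤ) (x : ℝ) :
    aeval x (fixedPoly M) = M 0 1 * x ^ 2 + (M 0 0 - M 1 1) * x - M 1 0 := by
  simp only [fixedPoly, map_add, map_mul, map_pow, aeval_X, eq_intCast, map_intCast]
  push_cast
  ring

structure HasOrderedEntries (M : Matrix (Fin 2) (Fin 2) ℤ) : Prop where
  zero_le_d : 0 ≤ M 1 1
  d_le_b : M 1 1 ≤ M 0 1
  d_le_c : M 1 1 ≤ M 1 0
  b_le_a : M 0 1 ≤ M 0 0
  c_le_a : M 1 0 ≤ M 0 0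
  one_le_b : 1 ≤ M 0 1

theorem mul_letter_eq (M : Matrix (Fin 2) (Fin 2) ℤ) (ℓ : ℤ) :
    M * !![ℓ, 1; 1, 0] = !![M 0 0 * ℓ + M 0 1, M 0 0; M 1 0 * ℓ + M 1 1, M 1 0] := by
  rw [Matrix.eta_fin_two M, Matrix.mul_fin_two]
  simp

namespace HasOrderedEntries

variable {M : Matrix (Fin 2) (Fin 2) ℤ}

theorem matHeightZ_eq (hM : HasOrderedEntries M) : (matHeightZ M : ℤ) = M 0 0 := by
  obtain ⟨_, _, _, _, _, _⟩ := hM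
  simp only [matHeightZ]
  omega

theorem polyHeight_fixedPoly_le (hM : HasOrderedEntries M) :
    polyHeight (fixedPoly M) ≤ matHeightZ M := by
  have := hM.matHeightZ_eq
  obtain ⟨_, _, _, _, _, _⟩ := hM
  refine polyHeight_le fun i => ?_
  simp only [fixedPoly, coeff_add, coeff_C_mul, coeff_X_pow, coeff_X, coeff_C]
  split_ifs <;> omega

theorem mul_letter (hM : HasOrderedEntries M) {ℓ : ℤ} (hℓ : 1 ≤ ℓ) :
    HasOrderedEntries (M * !![ℓ, 1; 1, 0]) := by
  obtain ⟨_, _, _, _, _, _⟩ := hM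
  rw [mul_letter_eq]
  constructor <;>
    simp only [Matrix.of_apply, Matrix.cons_val', Matrix.cons_val_zero, Matrix.cons_val_one,
      Matrix.cons_val_fin_one] <;>
    nlinarith

end HasOrderedEntries

namespace IsPurelyPeriodicPt

variable {α : ℝ} {M : Matrix (Fin 2) (Fin 2) ℤ}

theorem aeval_fixedPoly_eq_zero (hα : IsPurelyPeriodicPt α M) : aeval α (fixedPoly M) = 0 := by
  rw [aeval_fixedPoly]
  linear_combination hα.2.2

/-- `r = A + Bα > 1` is the eigenvalue of `M` on `(1, α)`. Were `α` rational, `r` would be a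
rational root of the monic characteristic polynomial, hence an integer dividing `det M = ±1`. -/
theorem irrational (hα : IsPurelyPeriodicPt α M) (hdet : IsUnit M.det) (hA : 1 ≤ M 0 0)
    (hB : 0 < M 0 1) : Irrational α := by
  rintro ⟨q, rfl⟩
  obtain ⟨hq0, -, hfix⟩ := hα
  have hfixℚ : q * (M 0 0 + M 0 1 * q) = M 1 0 + M 1 1 * q := by exact_mod_cast hfix
  rw [Matrix.det_fin_two] at hdet
  set r : ℚ := M 0 0 + M 0 1 * q
  have hchar :
      aeval r (X ^ 2 - C (M 0 0 + M 1 1) * X + C (M 0 0 * M 1 1 - M 0 1 * M 1 0)) = 0 := by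
    simp only [map_add, map_sub, map_mul, map_pow, aeval_X, eq_intCast, map_intCast]
    linear_combination (M 0 1 : ℚ) * hfixℚ
  obtain ⟨n, hnr⟩ := isInteger_of_is_root_of_monic (by monicity!) hchar
  rw [algebraMap_int_eq, eq_intCast] at hnr
  have hn1 : 1 < n := by
    have : (0 : ℚ) < M 0 1 * q := mul_pos (by exact_mod_cast hB) (by exact_mod_cast hq0)
    have : (1 : ℚ) ≤ M 0 0 := by exact_mod_cast hA
    exact_mod_cast (show (1 : ℚ) < n by linarith)
  have hnchar : n * (M 0 0 + M 1 1 - n) = M 0 0 * M 1 1 - M 0 1 * M 1 0 := by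
    rw [← hnr] at hchar
    simp only [map_add, map_sub, map_mul, map_pow, aeval_X, eq_intCast, map_intCast] at hchar
    exact_mod_cast (by linear_combination -hchar :
      (n : ℚ) * (M 0 0 + M 1 1 - n) = M 0 0 * M 1 1 - M 0 1 * M 1 0)
  have := Int.isUnit_iff.mp (isUnit_of_mul_isUnit_left (hnchar ▸ hdet))
  omega

/-- Entrywise: `B ∣ p (A - D)` and `B ∣ p C`, as `P` is a rational multiple of `fixedPoly M`. -/
theorem coeff_two_smul_eq (hα : IsPurelyPeriodicPt α M) (hirr : Irrational α) {P : ℤ[X]}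
    (hPα : aeval α P = 0) (hdeg : P.natDegree ≤ 2) :
    P.coeff 2 • (M - M 0 0 • 1) = M 0 1 • !![0, P.coeff 2; -P.coeff 0, -P.coeff 1] := by
  rw [aeval_eq_sum_range' (Nat.lt_succ_of_le hdeg)] at hPα
  simp only [Finset.sum_range_succ, Finset.sum_range_zero, zsmul_eq_mul] at hPα
  obtain ⟨h1, h0⟩ := hirr.eq_zero_of_intCast_mul_add
    (x := P.coeff 1 * M 0 1 - P.coeff 2 * (M 0 0 - M 1 1))
    (y := P.coeff 0 * M 0 1 + P.coeff 2 * M 1 0) (by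
      push_cast
      linear_combination (M 0 1 : ℝ) * hPα - (P.coeff 2 : ℝ) * hα.2.2)
  rw [Matrix.one_fin_two]
  ext i j
  fin_cases i <;> fin_cases j <;>
    simp only [Fin.zero_eta, Fin.mk_one, Matrix.smul_apply, Matrix.sub_apply, Matrix.of_apply,
      Matrix.cons_val', Matrix.cons_val_zero, Matrix.cons_val_one, Matrix.cons_val_fin_one,
      smul_eq_mul] <;>
    linarith

theorem natDegree_minpoly (hα : IsPurelyPeriodicPt α M) (hirr : Irrational α)
    (hB : M 0 1 ≠ 0) : (minpoly ℚ α).natDegree = 2 :=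
  natDegree_minpoly_eq_two hirr hα.aeval_fixedPoly_eq_zero (natDegree_fixedPoly hB)

theorem algHeight_le_matHeightZ (hα : IsPurelyPeriodicPt α M) (hirr : Irrational α)
    (hM : HasOrderedEntries M) : algHeight α ≤ matHeightZ M := by
  have hB : M 0 1 ≠ 0 := by linarith [hM.one_le_b]
  refine (algHeight_le (fixedPoly_ne_zero hB) hα.aeval_fixedPoly_eq_zero ?_).trans
    hM.polyHeight_fixedPoly_le
  rw [natDegree_fixedPoly hB, hα.natDegree_minpoly hirr hB]

theorem exists_natAbs_leadingCoeff_le_algHeight (hα : IsPurelyPeriodicPt α M)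
    (hirr : Irrational α) (hB : M 0 1 ≠ 0) :
    ∃ Q : ℤ[X], aeval α Q = 0 ∧ Q.natDegree = 2 ∧ Q.leadingCoeff.natAbs ≤ algHeight α := by
  rw [← hα.natDegree_minpoly hirr hB]
  refine _root_.exists_natAbs_leadingCoeff_le_algHeight (fixedPoly_ne_zero hB)
    hα.aeval_fixedPoly_eq_zero ?_
  rw [natDegree_fixedPoly hB, hα.natDegree_minpoly hirr hB]

theorem one_le_abs_sub (hα : IsPurelyPeriodicPt α M) (hM : HasOrderedEntries M) {β : ℝ}
    (hβ : aeval β (minpoly ℚ α) = 0) (hne : β ≠ α) : 1 ≤ |β - α| := by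
  have hβ₀ := aeval_eq_zero_of_aeval_minpoly_eq_zero hα.aeval_fixedPoly_eq_zero hβ
  have hα₀ := hα.aeval_fixedPoly_eq_zero
  rw [aeval_fixedPoly] at hα₀ hβ₀
  exact one_le_abs_sub_of_roots (by exact_mod_cast hM.one_le_b) (by exact_mod_cast hM.b_le_a)
    (by exact_mod_cast hM.d_le_c) hα.1 hα₀ hβ₀ hne

end IsPurelyPeriodicPt

theorem wordMatrix_append (u v : List ℤ) : wordMatrix (u ++ v) = wordMatrix u * wordMatrix v := by
  simp [wordMatrix]

theorem wordMatrix_singleton (ℓ : ℤ) : wordMatrix [ℓ] = !![ℓ, 1; 1, 0] := by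
  simp [wordMatrix]

theorem wordMatrix_replicate (t : ℕ) (ℓ : ℤ) :
    wordMatrix (List.replicate t ℓ) = !![ℓ, 1; 1, 0] ^ t := by
  simp [wordMatrix]

theorem wordMatrix_flatten_replicate (t : ℕ) (w : List ℤ) :
    wordMatrix (List.replicate t w).flatten = wordMatrix w ^ t := by
  induction t with
  | zero => simp [wordMatrix]
  | succ t ih => rw [List.replicate_succ, List.flatten_cons, wordMatrix_append, ih, pow_succ']

theorem isUnit_letter (ℓ : ℤ) : IsUnit !![ℓ, 1; 1, 0] :=
  (Matrix.isUnit_iff_isUnit_det _).mpr (by simp [Matrix.det_fin_two])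

theorem isUnit_rotation : IsUnit !![(0 : ℤ), 1; -1, 0] :=
  (Matrix.isUnit_iff_isUnit_det _).mpr (by simp [Matrix.det_fin_two])

theorem isUnit_wordMatrix (w : List ℤ) : IsUnit (wordMatrix w) := by
  induction w with
  | nil => exact isUnit_one
  | cons ℓ w ih =>
    rw [← List.singleton_append, wordMatrix_append, wordMatrix_singleton]
    exact (isUnit_letter ℓ).mul ih

theorem hasOrderedEntries_wordMatrix {w : List ℤ} (hw : w ≠ []) (hl : ∀ ℓ ∈ w, 1 ≤ ℓ) :
    HasOrderedEntries (wordMatrix w) := by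
  induction w using List.reverseRecOn with
  | nil => contradiction
  | append_singleton w ℓ ih =>
    have hℓ := hl ℓ (by simp)
    rw [wordMatrix_append, wordMatrix_singleton]
    rcases eq_or_ne w [] with rfl | hw'
    · simp only [wordMatrix, List.map_nil, List.prod_nil, Matrix.one_mul]
      constructor <;> simp [hℓ]
    · exact (ih hw' fun x hx => hl x (by simp [hx])).mul_letter hℓ

theorem wordMatrix_zero_zero_le {w : List ℤ} {L : ℤ} (hw : w ≠ [])
    (hl : ∀ ℓ ∈ w, 1 ≤ ℓ ∧ ℓ ≤ L) : wordMatrix w 0 0 ≤ (L + 1) * wordMatrix w 0 1 := by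
  obtain ⟨v, ℓ, rfl⟩ : ∃ v ℓ, w = v ++ [ℓ] :=
    ⟨_, _, (List.dropLast_append_getLast hw).symm⟩
  have hℓ := hl ℓ (by simp)
  have hv : 0 ≤ wordMatrix v 0 1 ∧ wordMatrix v 0 1 ≤ wordMatrix v 0 0 := by
    rcases eq_or_ne v [] with rfl | hv
    · simp [wordMatrix]
    · have hM := hasOrderedEntries_wordMatrix hv fun x hx => (hl x (by simp [hx])).1
      exact ⟨by linarith [hM.one_le_b], hM.b_le_a⟩
  rw [wordMatrix_append, wordMatrix_singleton, mul_letter_eq]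
  simp only [Matrix.of_apply, Matrix.cons_val', Matrix.cons_val_zero, Matrix.cons_val_one,
    Matrix.cons_val_fin_one]
  nlinarith

theorem pow_mul_mul_sub_mul_pow_mul {R : Type*} [Ring R] (x y : R) (t : ℕ) :
    x ^ t * y * x - x * (x ^ t * y) = x ^ t * (y * x - x * y) := by
  rw [← mul_assoc x, (Commute.self_pow x t).eq, mul_sub, mul_assoc, mul_assoc]

theorem letter_commutator (a b : ℤ) :
    !![a, 1; 1, 0] * !![b, 1; 1, 0] - !![b, 1; 1, 0] * !![a, 1; 1, 0] =
      (a - b) • !![0, 1; -1, 0] := by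
  ext i j
  fin_cases i <;> fin_cases j <;> simp [mul_comm]

structure IsSturmianSeq (a b : ℤ) (s : ℕ → ℕ) (m : ℕ → List ℤ) : Prop where
  zero : m 0 = [b]
  one : m 1 = List.replicate (s 1 - 1) b ++ [a]
  succ_succ : ∀ n, m (n + 2) = (List.replicate (s (n + 2)) (m (n + 1))).flatten ++ m n

namespace IsSturmianSeq

variable {a b : ℤ} {s : ℕ → ℕ} {m : ℕ → List ℤ}

theorem ne_nil (hS : IsSturmianSeq a b s m) (k : ℕ) : m k ≠ [] := by
  induction k using Nat.twoStepInduction with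
  | zero => simp [hS.zero]
  | one => simp [hS.one]
  | more n ih _ => simp [hS.succ_succ, ih]

theorem eq_or_eq_of_mem (hS : IsSturmianSeq a b s m) (k : ℕ) : ∀ ℓ ∈ m k, ℓ = a ∨ ℓ = b := by
  induction k using Nat.twoStepInduction with
  | zero => simp [hS.zero]
  | one =>
    intro ℓ hℓ
    rw [hS.one, List.mem_append, List.mem_replicate, List.mem_singleton] at hℓ
    tauto
  | more n ih ih' =>
    intro ℓ hℓ
    rw [hS.succ_succ, List.mem_append, List.mem_flatten] at hℓ
    obtain ⟨w, hw, hℓw⟩ | hℓ := hℓ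
    · exact ih' ℓ (List.eq_of_mem_replicate hw ▸ hℓw)
    · exact ih ℓ hℓ

theorem exists_commutator_succ (hS : IsSturmianSeq a b s m) (n : ℕ) :
    ∃ G : Matrix (Fin 2) (Fin 2) ℤ, IsUnit G ∧
      wordMatrix (m (n + 1)) * wordMatrix (m n) - wordMatrix (m n) * wordMatrix (m (n + 1)) =
        (a - b) • G := by
  induction n with
  | zero =>
    refine ⟨!![b, 1; 1, 0] ^ (s 1 - 1) * !![0, 1; -1, 0],
      ((isUnit_letter b).pow _).mul isUnit_rotation, ?_⟩
    rw [hS.one, hS.zero, wordMatrix_append, wordMatrix_replicate, wordMatrix_singleton,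
      wordMatrix_singleton, pow_mul_mul_sub_mul_pow_mul, letter_commutator, Matrix.mul_smul]
  | succ n ih =>
    obtain ⟨G, hG, hcomm⟩ := ih
    refine ⟨-(wordMatrix (m (n + 1)) ^ s (n + 2) * G),
      (((isUnit_wordMatrix _).pow _).mul hG).neg, ?_⟩
    rw [hS.succ_succ, wordMatrix_append, wordMatrix_flatten_replicate, pow_mul_mul_sub_mul_pow_mul,
      ← neg_sub, hcomm, Matrix.mul_neg, Matrix.mul_smul, smul_neg]

theorem exists_commutator (hS : IsSturmianSeq a b s m) (k : ℕ) :
    ∃ M' G : Matrix (Fin 2) (Fin 2) ℤ, IsUnit G ∧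
      wordMatrix (m k) * M' - M' * wordMatrix (m k) = (a - b) • G := by
  cases k with
  | zero =>
    refine ⟨!![a, 1; 1, 0], -!![0, 1; -1, 0], isUnit_rotation.neg, ?_⟩
    rw [hS.zero, wordMatrix_singleton, ← neg_sub, letter_commutator, smul_neg]
  | succ n =>
    obtain ⟨G, hG, hcomm⟩ := hS.exists_commutator_succ n
    exact ⟨_, G, hG, hcomm⟩

theorem hasOrderedEntries (hS : IsSturmianSeq a b s m) (ha : 0 < a) (hb : 0 < b) (k : ℕ) :
    HasOrderedEntries (wordMatrix (m k)) :=
  hasOrderedEntries_wordMatrix (hS.ne_nil k) fun ℓ hℓ => by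
    rcases hS.eq_or_eq_of_mem k ℓ hℓ with rfl | rfl <;> omega

theorem wordMatrix_zero_zero_le_mul_abs (hS : IsSturmianSeq a b s m) (ha : 0 < a) (hb : 0 < b)
    (hab : a ≠ b) (k : ℕ) {α : ℝ} (hα : IsPurelyPeriodicPt α (wordMatrix (m k)))
    (hirr : Irrational α) {P : ℤ[X]} (hPα : aeval α P = 0) (hdeg : P.natDegree = 2) :
    wordMatrix (m k) 0 0 ≤ (max a b + 1) * |a - b| * |P.leadingCoeff| := by
  have hl : ∀ ℓ ∈ m k, 1 ≤ ℓ ∧ ℓ ≤ max a b := fun ℓ hℓ => by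
    rcases hS.eq_or_eq_of_mem k ℓ hℓ with rfl | rfl <;> omega
  have hp : P.coeff 2 ≠ 0 := by
    rw [← hdeg]
    exact leadingCoeff_ne_zero.mpr (ne_zero_of_natDegree_gt (hdeg ▸ one_lt_two))
  obtain ⟨M', G, hG, hcomm⟩ := hS.exists_commutator k
  have hdvd : wordMatrix (m k) 0 1 ∣ P.coeff 2 * (a - b) :=
    dvd_mul_of_commutator_eq_smul hG hcomm (hα.coeff_two_smul_eq hirr hPα hdeg.le)
  have hB : wordMatrix (m k) 0 1 ≤ |P.coeff 2 * (a - b)| :=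
    Int.le_of_dvd (abs_pos.mpr (mul_ne_zero hp (sub_ne_zero.mpr hab))) ((dvd_abs _ _).mpr hdvd)
  calc wordMatrix (m k) 0 0 ≤ (max a b + 1) * wordMatrix (m k) 0 1 :=
        wordMatrix_zero_zero_le (hS.ne_nil k) hl
    _ ≤ (max a b + 1) * |P.coeff 2 * (a - b)| :=
        mul_le_mul_of_nonneg_left hB (by linarith [le_max_left a b])
    _ = (max a b + 1) * |a - b| * |P.leadingCoeff| := by
        rw [leadingCoeff, hdeg, abs_mul]
        ring

end IsSturmianSeq

theorem stmt14_general (a b : ℤ) (ha : 0 < a) (hb : 0 < b) (hab : a ≠ b)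
    (s : ℕ → ℕ) (m : ℕ → List ℤ)
    (hm0 : m 0 = [b]) (hm1 : m 1 = List.replicate (s 1 - 1) b ++ [a])
    (hmr : ∀ k : ℕ, 1 ≤ k →
      m (k + 1) = (List.replicate (s (k + 1)) (m k)).flatten ++ m (k - 1)) :
    ∃ κ₁ κ₂ κ₃ κ₄ : ℝ, 0 < κ₁ ∧ 0 < κ₂ ∧ 0 < κ₃ ∧ 0 < κ₄ ∧
      ∀ k : ℕ, ∀ α : ℝ, IsPurelyPeriodicPt α (wordMatrix (m k)) →
        κ₁ * (matHeightZ (wordMatrix (m k)) : ℝ) ≤ (algHeight α : ℝ) ∧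
        (algHeight α : ℝ) ≤ κ₂ * (matHeightZ (wordMatrix (m k)) : ℝ) ∧
        (∀ P : Polynomial ℤ, Polynomial.aeval α P = 0 →
          P.natDegree = (minpoly ℚ α).natDegree → P.IsPrimitive →
          κ₃ * (matHeightZ (wordMatrix (m k)) : ℝ) ≤ |(P.leadingCoeff : ℝ)|) ∧
        (∀ β : ℝ, Polynomial.aeval β (minpoly ℚ α) = 0 → β ≠ α →
          κ₄ ≤ |β - α|) := by
  have hS : IsSturmianSeq a b s m := ⟨hm0, hm1, fun n => hmr (n + 1) le_add_self⟩
  set K : ℤ := (max a b + 1) * |a - b|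
  have hK : (0 : ℝ) < K := by
    have := sub_ne_zero.mpr hab
    have := le_max_left a b
    exact_mod_cast (show 0 < K by positivity)
  refine ⟨_, 1, _, 1, inv_pos.mpr hK, one_pos, inv_pos.mpr hK, one_pos, fun k α hα => ?_⟩
  have hM := hS.hasOrderedEntries ha hb k
  have hirr : Irrational α :=
    hα.irrational ((Matrix.isUnit_iff_isUnit_det _).mp (isUnit_wordMatrix _))
      (hM.one_le_b.trans hM.b_le_a) hM.one_le_b
  have hB : wordMatrix (m k) 0 1 ≠ 0 := by linarith [hM.one_le_b]
  have hdeg : (minpoly ℚ α).natDegree = 2 := hα.natDegree_minpoly hirr hB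
  have hX : (matHeightZ (wordMatrix (m k)) : ℝ) = wordMatrix (m k) 0 0 := by
    exact_mod_cast hM.matHeightZ_eq
  have hlow : ∀ P : ℤ[X], aeval α P = 0 → P.natDegree = 2 →
      (K : ℝ)⁻¹ * (matHeightZ (wordMatrix (m k)) : ℝ) ≤ |(P.leadingCoeff : ℝ)| := by
    intro P hPα hPdeg
    rw [inv_mul_le_iff₀ hK, hX]
    exact_mod_cast hS.wordMatrix_zero_zero_le_mul_abs ha hb hab k hα hirr hPα hPdeg
  refine ⟨?_, ?_, fun P hPα hPdeg _ => hlow P hPα (hPdeg.trans hdeg), fun β hβ hne => ?_⟩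
  · obtain ⟨P, hPα, hPdeg, hPh⟩ := hα.exists_natAbs_leadingCoeff_le_algHeight hirr hB
    refine (hlow P hPα hPdeg).trans ?_
    rw [← Int.cast_abs, Int.abs_eq_natAbs]
    exact_mod_cast hPh
  · rw [one_mul]
    exact_mod_cast hα.algHeight_le_matHeightZ hirr hM
  · exact hα.one_le_abs_sub hM hβ hne

/-- Lemma 6.1: for the Sturmian words `m_k` on distinct positive integers
`a ≠ b`, and `α_k = [0; m_k, m_k, ...]`, one has `H(α_k) ≫≪ X_k = H(M_k)`;
moreover the leading coefficient of the minimal integer polynomial of `α_k` is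
`≫ X_k` and the Galois conjugate `α'_k` satisfies `|α'_k - α_k| ≫ 1`, with
constants depending only on `a`, `b` and `(sₖ)`. -/
theorem stmt14 (a b : ℤ) (ha : 0 < a) (hb : 0 < b) (hab : a ≠ b)
    (s : ℕ → ℕ) (hs : ∀ k, 1 ≤ s k) (m : ℕ → List ℤ)
    (hm0 : m 0 = [b]) (hm1 : m 1 = List.replicate (s 1 - 1) b ++ [a])
    (hmr : ∀ k : ℕ, 1 ≤ k →
      m (k + 1) = (List.replicate (s (k + 1)) (m k)).flatten ++ m (k - 1)) :
    ∃ κ₁ κ₂ κ₃ κ₄ : ℝ, 0 < κ₁ ∧ 0 < κ₂ ∧ 0 < κ₃ ∧ 0 < κ₄ ∧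
      ∀ k : ℕ, ∀ α : ℝ, IsPurelyPeriodicPt α (wordMatrix (m k)) →
        κ₁ * (matHeightZ (wordMatrix (m k)) : ℝ) ≤ (algHeight α : ℝ) ∧
        (algHeight α : ℝ) ≤ κ₂ * (matHeightZ (wordMatrix (m k)) : ℝ) ∧
        (∀ P : Polynomial ℤ, Polynomial.aeval α P = 0 →
          P.natDegree = (minpoly ℚ α).natDegree → P.IsPrimitive →
          κ₃ * (matHeightZ (wordMatrix (m k)) : ℝ) ≤ |(P.leadingCoeff : ℝ)|) ∧
        (∀ β : ℝ, Polynomial.aeval β (minpoly ℚ α) = 0 → β ≠ α →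
          κ₄ ≤ |β - α|) :=
  stmt14_general a b ha hb hab s m hm0 hm1 hmr
end

section
/- Let ξ be an irrational real number with convergents p₀/q₀, p₁/q₁, ..., and suppose the prefix of the first N partial quotients (after the integer part 0) forms a palindrome. Then the symmetric matrix associated to this palindromic prefix has entries x₀ = q_N, x₁ = p_N = q_{N-1}, x₂ = p_{N-1}. Consequently x₀x₂ - x₁² = ±1, and if the partial quotients of ξ are bounded, then max(|x₀ξ - x₁|, |x₀ξ² - x₂|) ≫≪ x₀^{-1}. -/
lemma wordMatrix_concat (m : List ℤ) (a : ℤ) :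
    wordMatrix (m ++ [a]) = wordMatrix m * !![a, 1; 1, 0] := by
  simp [wordMatrix]

open Matrix in
lemma wordMatrix_reverse (m : List ℤ) :
    wordMatrix m.reverse = (wordMatrix m)ᵀ := by
  rw [wordMatrix, wordMatrix, Matrix.transpose_list_prod]
  congr 1
  rw [List.map_reverse, List.map_map]
  congr 1
  apply List.map_congr_left
  intro a _
  show _ = (!![a,1;1,0])ᵀ
  ext i j
  fin_cases i <;> fin_cases j <;> rfl

set_option maxHeartbeats 1000000 in
/-- Let `ξ = [0; c₁, c₂, ...]` be irrational with bounded partial quotients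
(`t i` are the complete quotients, `p N / q N` the convergents).  If the prefix
`c₁⋯c_N` is a palindrome, then the associated symmetric matrix has entries
`x₀ = q_N`, `x₁ = p_N = q_{N-1}`, `x₂ = p_{N-1}`; consequently
`x₀x₂ - x₁² = ±1` and `max(|x₀ξ - x₁|, |x₀ξ² - x₂|) ≫≪ x₀⁻¹`, with constants
depending only on the bound `B` for the partial quotients. -/
theorem stmt16 (ξ : ℝ) (hξ : Irrational ξ) (c : ℕ → ℕ) (B : ℕ)
    (hc : ∀ i, 1 ≤ i → 1 ≤ c i) (hB : ∀ i, 1 ≤ i → c i ≤ B)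
    (t : ℕ → ℝ) (ht1 : t 1 = ξ⁻¹)
    (htrec : ∀ i, 1 ≤ i → t i = (c i : ℝ) + (t (i + 1))⁻¹)
    (htgt : ∀ i, 1 ≤ i → 1 < t i)
    (p q : ℕ → ℤ) (hq0 : q 0 = 1) (hp0 : p 0 = 0)
    (hq1 : q 1 = c 1) (hp1 : p 1 = 1)
    (hqrec : ∀ N, q (N + 2) = (c (N + 2) : ℤ) * q (N + 1) + q N)
    (hprec : ∀ N, p (N + 2) = (c (N + 2) : ℤ) * p (N + 1) + p N) :
    ∃ κ κ' : ℝ, 0 < κ ∧ 0 < κ' ∧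
      ∀ N : ℕ, 1 ≤ N →
        (((List.range N).map fun i => c (i + 1)).reverse =
          (List.range N).map fun i => c (i + 1)) →
        wordMatrix ((List.range N).map fun i => (c (i + 1) : ℤ)) =
          !![q N, q (N - 1); p N, p (N - 1)] ∧
        p N = q (N - 1) ∧
        (q N * p (N - 1) - p N * p N = 1 ∨ q N * p (N - 1) - p N * p N = -1) ∧
        κ * ((q N : ℝ))⁻¹ ≤
          max |(q N : ℝ) * ξ - (p N : ℝ)| |(q N : ℝ) * ξ ^ 2 - (p (N - 1) : ℝ)| ∧
        max |(q N : ℝ) * ξ - (p N : ℝ)| |(q N : ℝ) * ξ ^ 2 - (p (N - 1) : ℝ)| ≤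
          κ' * ((q N : ℝ))⁻¹ := by
  have hB1 : (1:ℤ) ≤ B := by exact_mod_cast le_trans (hc 1 le_rfl) (hB 1 le_rfl)
  have hqm : ∀ M, 1 ≤ q M ∧ q M ≤ q (M+1) := by
    intro M
    induction M with
    | zero =>
      refine ⟨by rw [hq0], ?_⟩
      rw [hq0, hq1]; exact_mod_cast hc 1 le_rfl
    | succ M ih =>
      obtain ⟨h1, h2⟩ := ih
      have h3 : 1 ≤ q (M+1) := h1.trans h2
      refine ⟨h3, ?_⟩
      have hc2 : (1:ℤ) ≤ (c (M+2) : ℤ) := by exact_mod_cast hc (M+2) (by omega)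
      rw [hqrec M]
      nlinarith
  have hq1le : ∀ M, (1:ℤ) ≤ q M := fun M => (hqm M).1
  have hqmono : ∀ M, q M ≤ q (M+1) := fun M => (hqm M).2
  have htpos : ∀ i, 1 ≤ i → 0 < t i := fun i hi => lt_trans one_pos (htgt i hi)
  have htub : ∀ i, 1 ≤ i → t i ≤ (B:ℝ) + 1 := by
    intro i hi
    rw [htrec i hi]
    have h1 : 1 < t (i+1) := htgt (i+1) (by omega)
    have h2 : (t (i+1))⁻¹ < 1 := by
      rw [inv_lt_one_iff₀]; right; exact h1
    have h3 : (c i : ℝ) ≤ B := by exact_mod_cast hB i hi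
    linarith
  have hξ1 : 1 < ξ⁻¹ := ht1 ▸ htgt 1 le_rfl
  have hξpos : 0 < ξ := by
    rw [← inv_pos]; linarith
  have hξlt : ξ < 1 := by
    have h := mul_inv_cancel₀ (ne_of_gt hξpos)
    nlinarith [mul_pos hξpos (sub_pos.mpr hξ1)]
  have hkey : ∀ M, 1 ≤ M → ξ * ((q M : ℝ) * t (M+1) + (q (M-1) : ℝ))
      = (p M : ℝ) * t (M+1) + (p (M-1) : ℝ) := by
    intro M hM
    induction M, hM using Nat.le_induction with
    | base =>
      have h := htrec 1 le_rfl
      rw [ht1] at h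
      have ht2 : t 2 ≠ 0 := ne_of_gt (htpos 2 (by omega))
      have hξne : ξ ≠ 0 := ne_of_gt hξpos
      rw [hq1, hp1, hq0, hp0]
      push_cast
      field_simp at h
      simp only [Nat.reduceAdd] at h ⊢
      linear_combination -h
    | succ M hM IH =>
      obtain ⟨M', rfl⟩ : ∃ M', M = M' + 1 := ⟨M - 1, by omega⟩
      simp only [Nat.add_sub_cancel] at IH ⊢
      have h2 := htrec (M'+2) (by omega)
      have ht3 : t (M'+3) ≠ 0 := ne_of_gt (htpos (M'+3) (by omega))
      rw [h2] at IH
      field_simp at IH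
      rw [hqrec M', hprec M']
      push_cast
      linear_combination IH
  have hdet : ∀ M, 1 ≤ M → q M * p (M-1) - p M * q (M-1) = (-1)^M := by
    intro M hM
    induction M, hM using Nat.le_induction with
    | base => rw [hq1, hp1, hq0, hp0]; ring
    | succ M hM IH =>
      obtain ⟨M', rfl⟩ : ∃ M', M = M' + 1 := ⟨M - 1, by omega⟩
      simp only [Nat.add_sub_cancel] at IH ⊢
      rw [hqrec M', hprec M']
      linear_combination -IH
  have hstep : ∀ M, 1 ≤ M → q M ≤ ((B:ℤ)+1) * q (M-1) := by
    intro M hM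
    match M, hM with
    | 1, _ =>
      show q 1 ≤ ((B:ℤ)+1) * q 0
      rw [hq1, hq0]
      have : (c 1 : ℤ) ≤ B := by exact_mod_cast hB 1 le_rfl
      linarith
    | (M'+2), _ =>
      show q (M'+2) ≤ ((B:ℤ)+1) * q (M'+1)
      rw [hqrec M']
      have h1 : (c (M'+2) : ℤ) ≤ B := by exact_mod_cast hB (M'+2) (by omega)
      have h2 := hq1le (M'+1)
      have h3 := hqmono M'
      nlinarith [hq1le M']
  have hmat : ∀ M, 1 ≤ M → wordMatrix ((List.range M).map fun i => (c (i+1) : ℤ))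
      = !![q M, q (M-1); p M, p (M-1)] := by
    intro M hM
    induction M, hM using Nat.le_induction with
    | base =>
      show wordMatrix ([0].map fun i => (c (i+1) : ℤ)) = !![q 1, q 0; p 1, p 0]
      rw [hq1, hp1, hq0, hp0]
      simp [wordMatrix]
    | succ M hM IH =>
      obtain ⟨M', rfl⟩ : ∃ M', M = M' + 1 := ⟨M - 1, by omega⟩
      simp only [Nat.add_sub_cancel] at IH ⊢
      rw [List.range_succ, List.map_append, List.map_cons, List.map_nil,
        wordMatrix_concat, IH, hqrec M', hprec M']
      ext i j
      fin_cases i <;> fin_cases j <;>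
        simp [Matrix.mul_apply, Fin.sum_univ_two] <;> ring
  -- absolute value formula
  have habs : ∀ M, 1 ≤ M → |(q M:ℝ) * ξ - (p M:ℝ)|
      = ((q M:ℝ) * t (M+1) + (q (M-1):ℝ))⁻¹ := by
    intro M hM
    have hk := hkey M hM
    have hd : (q M:ℝ) * (p (M-1):ℝ) - (p M:ℝ) * (q (M-1):ℝ) = (-1:ℝ)^M := by
      exact_mod_cast hdet M hM
    have hq : (1:ℝ) ≤ (q M:ℝ) := by exact_mod_cast hq1le M
    have hq' : (1:ℝ) ≤ (q (M-1):ℝ) := by exact_mod_cast hq1le (M-1)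
    have hT := htgt (M+1) (by omega)
    have hDpos : 0 < (q M:ℝ) * t (M+1) + (q (M-1):ℝ) := by nlinarith
    have h1 : |(q M:ℝ) * ξ - (p M:ℝ)| * ((q M:ℝ) * t (M+1) + (q (M-1):ℝ)) = 1 := by
      rw [← abs_of_pos hDpos, ← abs_mul]
      have h2 : ((q M:ℝ) * ξ - (p M:ℝ)) * ((q M:ℝ) * t (M+1) + (q (M-1):ℝ))
          = (-1:ℝ)^M := by
        linear_combination (q M:ℝ) * hk + hd
      rw [h2, abs_pow, abs_neg, abs_one, one_pow]
    exact eq_inv_of_mul_eq_one_left h1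
  have hconv : ∀ M, |(q M:ℝ) * ξ - (p M:ℝ)| ≤ ((q M:ℝ))⁻¹ := by
    intro M
    rcases Nat.eq_zero_or_pos M with h0 | h0
    · subst h0; rw [hq0, hp0]; push_cast
      simp only [one_mul, sub_zero, inv_one]
      rw [abs_of_pos hξpos]; linarith
    · rw [habs M h0]
      have hq : (1:ℝ) ≤ (q M:ℝ) := by exact_mod_cast hq1le M
      have hq' : (1:ℝ) ≤ (q (M-1):ℝ) := by exact_mod_cast hq1le (M-1)
      have hT := htgt (M+1) (by omega)
      apply inv_anti₀ (by linarith)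
      nlinarith
  refine ⟨((B:ℝ)+2)⁻¹, (B:ℝ)+2, by positivity, by positivity, ?_⟩
  intro N hN hpal
  obtain ⟨N', rfl⟩ : ∃ N', N = N' + 1 := ⟨N - 1, by omega⟩
  simp only [Nat.add_sub_cancel]
  have hmatN : wordMatrix ((List.range (N'+1)).map fun i => (c (i+1) : ℤ))
      = !![q (N'+1), q N'; p (N'+1), p N'] := hmat (N'+1) (by omega)
  have hrev : ((List.range (N'+1)).map fun i => (c (i+1):ℤ)).reverse
      = (List.range (N'+1)).map fun i => (c (i+1):ℤ) := by
    have h1 : ((List.range (N'+1)).map fun i => (c (i+1):ℤ))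
        = ((List.range (N'+1)).map fun i => c (i+1)).map (fun n : ℕ => (n:ℤ)) := by
      rw [List.map_map]; rfl
    rw [h1, ← List.map_reverse, hpal]
  have hsym : Matrix.transpose (!![q (N'+1), q N'; p (N'+1), p N'] : Matrix (Fin 2) (Fin 2) ℤ)
      = !![q (N'+1), q N'; p (N'+1), p N'] := by
    rw [← hmatN, ← wordMatrix_reverse, hrev]
  have hpq : p (N'+1) = q N' := by
    have h := congrFun (congrFun hsym 0) 1
    simpa using h
  have hdetN : q (N'+1) * p N' - p (N'+1) * q N' = (-1)^(N'+1) := hdet (N'+1) (by omega)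
  have hdet' : q (N'+1) * p N' - p (N'+1) * p (N'+1) = 1 ∨
      q (N'+1) * p N' - p (N'+1) * p (N'+1) = -1 := by
    rw [hpq] at hdetN ⊢
    rcases neg_one_pow_eq_or ℤ (N'+1) with h | h
    · left; rw [hdetN, h]
    · right; rw [hdetN, h]
  have hT1 : 1 < t (N'+2) := htgt _ (by omega)
  have hTB : t (N'+2) ≤ (B:ℝ)+1 := htub _ (by omega)
  have hqR : (1:ℝ) ≤ (q (N'+1) : ℝ) := by exact_mod_cast hq1le (N'+1)
  have hq'R : (1:ℝ) ≤ (q N' : ℝ) := by exact_mod_cast hq1le N'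
  have hmonoR : (q N' : ℝ) ≤ (q (N'+1) : ℝ) := by exact_mod_cast hqmono N'
  have hxpos : (0:ℝ) < (q (N'+1):ℝ) := by linarith
  have hq'pos : (0:ℝ) < (q N':ℝ) := by linarith
  have hDpos : 0 < (q (N'+1):ℝ) * t (N'+2) + (q N':ℝ) := by nlinarith
  have hE : |(q (N'+1):ℝ) * ξ - (p (N'+1):ℝ)|
      = ((q (N'+1):ℝ) * t (N'+2) + (q N':ℝ))⁻¹ := habs (N'+1) (by omega)
  refine ⟨hmatN, hpq, hdet', ?_, ?_⟩
  · refine le_trans ?_ (le_max_left _ _)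
    rw [hE, ← mul_inv]
    apply inv_anti₀ hDpos
    nlinarith
  · apply max_le
    · rw [hE]
      have h1 : ((q (N'+1):ℝ) * t (N'+2) + (q N':ℝ))⁻¹ ≤ ((q (N'+1):ℝ))⁻¹ := by
        apply inv_anti₀ hxpos; nlinarith
      have h2 : ((q (N'+1):ℝ))⁻¹ ≤ ((B:ℝ)+2) * ((q (N'+1):ℝ))⁻¹ := by
        nlinarith [inv_pos.mpr hxpos]
      linarith
    · have hpqR : (p (N'+1):ℝ) = (q N':ℝ) := by exact_mod_cast hpq
      have hsplit : (q (N'+1):ℝ) * ξ^2 - (p N':ℝ)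
          = ξ * ((q (N'+1):ℝ) * ξ - (p (N'+1):ℝ)) + ((q N':ℝ) * ξ - (p N':ℝ)) := by
        rw [hpqR]; ring
      rw [hsplit]
      have h1 := hconv (N'+1)
      have h2 := hconv N'
      have hstepR : (q (N'+1):ℝ) ≤ ((B:ℝ)+1) * (q N':ℝ) := by
        exact_mod_cast hstep (N'+1) (by omega)
      have h3 : ((q N':ℝ))⁻¹ ≤ ((B:ℝ)+1) * ((q (N'+1):ℝ))⁻¹ := by
        rw [← div_eq_mul_inv, inv_eq_one_div, div_le_div_iff₀ hq'pos hxpos]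
        linarith
      have h4 : |ξ * ((q (N'+1):ℝ) * ξ - (p (N'+1):ℝ)) + ((q N':ℝ) * ξ - (p N':ℝ))|
          ≤ |ξ * ((q (N'+1):ℝ) * ξ - (p (N'+1):ℝ))| + |(q N':ℝ) * ξ - (p N':ℝ)| :=
        abs_add_le _ _
      have h5 : |ξ * ((q (N'+1):ℝ) * ξ - (p (N'+1):ℝ))|
          ≤ |(q (N'+1):ℝ) * ξ - (p (N'+1):ℝ)| := by
        rw [abs_mul, abs_of_pos hξpos]
        calc ξ * |(q (N'+1):ℝ) * ξ - (p (N'+1):ℝ)|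
            ≤ 1 * |(q (N'+1):ℝ) * ξ - (p (N'+1):ℝ)| :=
              mul_le_mul_of_nonneg_right hξlt.le (abs_nonneg _)
          _ = _ := one_mul _
      have h6 : ((B:ℝ)+2) * ((q (N'+1):ℝ))⁻¹
          = ((q (N'+1):ℝ))⁻¹ + ((B:ℝ)+1) * ((q (N'+1):ℝ))⁻¹ := by ring
      rw [h6]
      linarith
end
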